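/- Let c > 0 and R > 0 satisfy R < c and |β_l − c| < R for all l ∈ {1, …, m}, and define for x > 0: Q(x) = −(∏_{l=1}^m (−β_l)^{n_l} · x^p / (2πi · (|n|+p−1)!)) · ∮_{|t−c|=R} exp(−x·t) · t^{|n|+p−1} · ∏_{l=1}^m (t − β_l)^{−n_l} dt (counterclockwise circle integral). Then for every integer j with 0 ≤ j ≤ |n| − 2 one has ∫_0^∞ x^j · Q(x) dx = 0, and ∫_0^∞ x^{|n|−1} · Q(x) dx = 1. -/

import Mathlib

/-!
Write `h t = ∏ l, (t - β l) ^ (-n l)` and `q = |n| + p - 1`. The circle lies in `Re t > 0`, where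
`∫₀^∞ x^a e^{-xt} dx = a! / t^(a+1)`, so by Fubini the `j`-th moment of `Q` is a constant multiple
of `∮ t^(q-j-p-1) h t dt`. If `f` has no poles outside the circle, moving the contour to infinity
gives `∮ f = 2πi · lim_{t → ∞} t f t`. The poles `β l` of `h` lie inside the circle, so for
`j ≤ |n| - 2`, where the integrand is `O(t⁻²)`, the integral vanishes. For `j = |n| - 1` the
integrand is `h t / t`; subtracting `h 0 / t`, whose integral vanishes since `0` lies outside the
circle, gives `∮ = -2πi h 0 = -2πi / ∏ l, (-β l) ^ n l`, which cancels the normalisation of `Q`.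
-/

open MeasureTheory Finset

/-- The multiple Laguerre function of type II (integral representation),
with contour a counterclockwise circle of center `0` and radius `r`. -/
noncomputable def mlP {m : ℕ} (β : Fin m → ℝ) (p : ℕ) (r : ℝ) (ν : Fin m → ℕ)
    (x : ℝ) : ℂ :=
  (((∑ k, ν k) + p).factorial : ℂ) * (x : ℂ) ^ (-(p : ℤ)) /
      (2 * Real.pi * Complex.I * ∏ k, (-(β k : ℂ)) ^ (ν k)) *
    ∮ s in C((0 : ℂ), r),
      Complex.exp ((x : ℂ) * s) * s ^ (-(∑ k, ν k : ℤ) - (p : ℤ) - 1) *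
        ∏ k, (s - (β k : ℂ)) ^ (ν k)

/-- The multiple Laguerre linear form of type I (integral representation),
with contour a counterclockwise circle of center `c` and radius `R`. -/
noncomputable def mlQ {m : ℕ} (β : Fin m → ℝ) (p : ℕ) (c R : ℝ) (ν : Fin m → ℕ)
    (y : ℝ) : ℂ :=
  -((∏ l, (-(β l : ℂ)) ^ (ν l)) * (y : ℂ) ^ p /
      (2 * Real.pi * Complex.I * (((∑ k, ν k) + p - 1).factorial : ℂ))) *
    ∮ t in C((c : ℂ), R),
      Complex.exp (-((y : ℂ) * t)) * t ^ ((∑ k, ν k) + p - 1) *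
        ∏ l, (t - (β l : ℂ)) ^ (-(ν l : ℤ))


open Set Filter Metric Topology Bornology Complex Real

section Laplace

variable {t : ℂ}

theorem norm_pow_mul_cexp_neg_mul {x : ℝ} (hx : 0 ≤ x) (k : ℕ) :
    ‖(x : ℂ) ^ k * cexp (-(x * t))‖ = x ^ k * Real.exp (-t.re * x) := by
  simp [norm_exp, abs_of_nonneg hx, mul_comm]

theorem integrableOn_pow_mul_cexp_neg_mul_Ioi (ht : 0 < t.re) (k : ℕ) :
    IntegrableOn (fun x : ℝ => (x : ℂ) ^ k * cexp (-(x * t))) (Ioi 0) := by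
  refine Integrable.mono' (integrableOn_rpow_mul_exp_neg_mul_rpow (p := 1) (s := k)
    (by linarith [k.cast_nonneg (α := ℝ)]) one_pos ht)
    (by fun_prop : Continuous _).aestronglyMeasurable ?_
  filter_upwards [ae_restrict_mem measurableSet_Ioi] with x hx
  rw [norm_pow_mul_cexp_neg_mul (le_of_lt hx), Real.rpow_one, Real.rpow_natCast]

theorem tendsto_pow_mul_cexp_neg_mul_atTop (ht : 0 < t.re) (k : ℕ) :
    Tendsto (fun x : ℝ => (x : ℂ) ^ k * cexp (-(x * t))) atTop (𝓝 0) := by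
  rw [tendsto_zero_iff_norm_tendsto_zero]
  refine (tendsto_rpow_mul_exp_neg_mul_atTop_nhds_zero k _ ht).congr' ?_
  filter_upwards [eventually_ge_atTop 0] with x hx
  rw [norm_pow_mul_cexp_neg_mul hx, Real.rpow_natCast]

/-- Integration by parts; `0 ^ k` is the boundary term at `x = 0`. -/
theorem integral_pow_mul_cexp_neg_mul_recurrence (ht : 0 < t.re) (k : ℕ) :
    k * (∫ x in Ioi (0 : ℝ), (x : ℂ) ^ (k - 1) * cexp (-(x * t))) -
      t * ∫ x in Ioi (0 : ℝ), (x : ℂ) ^ k * cexp (-(x * t)) = -0 ^ k := by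
  have hderiv : ∀ x ∈ Ici (0 : ℝ), HasDerivAt (fun x : ℝ => (x : ℂ) ^ k * cexp (-(x * t)))
      (k * ((x : ℂ) ^ (k - 1) * cexp (-(x * t))) - t * ((x : ℂ) ^ k * cexp (-(x * t)))) x := by
    intro x _
    have hexp : HasDerivAt (fun x : ℝ => cexp (-(x * t))) (cexp (-(x * t)) * -t) x := by
      simpa using ((hasDerivAt_id (x : ℂ)).mul_const t).neg.cexp.comp_ofReal
    exact (((hasDerivAt_pow k (x : ℂ)).comp_ofReal).mul hexp).congr_deriv (by ring)
  have hint : ∀ j, IntegrableOn (fun x : ℝ => (x : ℂ) ^ j * cexp (-(x * t))) (Ioi 0) :=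
    integrableOn_pow_mul_cexp_neg_mul_Ioi ht
  have := integral_Ioi_of_hasDerivAt_of_tendsto' hderiv
    (((hint (k - 1)).const_mul _).sub ((hint k).const_mul _))
    (tendsto_pow_mul_cexp_neg_mul_atTop ht k)
  rwa [integral_sub ((hint (k - 1)).const_mul _) ((hint k).const_mul _), integral_const_mul,
    integral_const_mul, zero_sub, ofReal_zero, zero_mul, neg_zero, Complex.exp_zero,
    mul_one] at this

theorem integral_pow_mul_cexp_neg_mul (ht : 0 < t.re) (k : ℕ) :
    ∫ x in Ioi (0 : ℝ), (x : ℂ) ^ k * cexp (-(x * t)) = k.factorial / t ^ (k + 1) := by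
  have ht0 : t ≠ 0 := fun h => by simp [h] at ht
  induction k with
  | zero =>
    have := integral_pow_mul_cexp_neg_mul_recurrence ht 0
    simp only [CharP.cast_eq_zero, zero_mul, zero_sub, pow_zero, one_mul, neg_inj] at this
    simp only [pow_zero, one_mul, Nat.factorial_zero, Nat.cast_one, zero_add, pow_one]
    rw [eq_div_iff ht0, mul_comm, this]
  | succ k ih =>
    have := integral_pow_mul_cexp_neg_mul_recurrence ht (k + 1)
    rw [add_tsub_cancel_right, ih, zero_pow k.succ_ne_zero, neg_zero, sub_eq_zero] at this
    rw [Nat.factorial_succ, Nat.cast_mul, pow_succ _ (k + 1), ← div_div, mul_div_assoc, this,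
      mul_div_cancel_left₀ _ ht0]

end Laplace

theorem integral_circleIntegral_comm {μ : Measure ℝ} [SFinite μ] {F : ℝ → ℂ → ℂ} {G : ℝ → ℝ}
    {c : ℂ} {R : ℝ} (hF : Continuous fun p : ℝ × ℝ => F p.1 (circleMap c R p.2))
    (hG : Integrable G μ) (hFG : ∀ᵐ x ∂μ, ∀ θ, ‖F x (circleMap c R θ)‖ ≤ G x) :
    ∫ x, (∮ z in C(c, R), F x z) ∂μ = ∮ z in C(c, R), ∫ x, F x z ∂μ := by
  simp only [circleIntegral, intervalIntegral.integral_of_le Real.two_pi_pos.le]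
  have hint : Integrable
      (Function.uncurry fun x θ => deriv (circleMap c R) θ • F x (circleMap c R θ))
      (μ.prod (volume.restrict (Ioc 0 (2 * π)))) := by
    refine Integrable.mono' (hG.mul_prod (integrable_const |R|)) ?_ ?_
    · simp only [deriv_circleMap]
      exact (((continuous_circleMap 0 R).comp continuous_snd).mul continuous_const).smul hF
        |>.aestronglyMeasurable
    · filter_upwards [Measure.quasiMeasurePreserving_fst.ae hFG] with p hp
      simp only [Function.uncurry, deriv_circleMap, norm_smul, norm_mul, norm_circleMap_zero,
        norm_I, mul_one]
      rw [mul_comm]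
      exact mul_le_mul_of_nonneg_right (hp p.2) (abs_nonneg R)
  rw [integral_integral_swap hint]
  exact setIntegral_congr_fun measurableSet_Ioc fun θ _ => integral_smul _ _

theorem integral_pow_mul_circleIntegral_cexp_neg_mul (a : ℕ) {c : ℂ} {R : ℝ} (hR : 0 ≤ R)
    (hRc : R < c.re) {g : ℂ → ℂ} (hg : ContinuousOn g (sphere c R)) :
    ∫ x in Ioi (0 : ℝ), (x : ℂ) ^ a * ∮ z in C(c, R), cexp (-(x * z)) * g z =
      a.factorial * ∮ z in C(c, R), g z / z ^ (a + 1) := by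
  have hre : ∀ z ∈ sphere c R, c.re - R ≤ z.re := fun z hz => by
    have := abs_re_le_norm (z - c)
    rw [mem_sphere_iff_norm.1 hz, sub_re, abs_le] at this
    linarith
  have hδ : (0 : ℝ) < ((c.re - R : ℝ) : ℂ).re := by simpa using hRc
  obtain ⟨M, hM⟩ := (isCompact_sphere c R).exists_bound_of_continuousOn hg
  have hgγ : Continuous fun θ => g (circleMap c R θ) :=
    hg.comp_continuous (continuous_circleMap c R) (circleMap_mem_sphere c hR)
  simp_rw [← circleIntegral.integral_const_mul]
  rw [integral_circleIntegral_comm ((by fun_prop : Continuous fun p : ℝ × ℝ => (p.1 : ℂ) ^ a).mul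
    ((by fun_prop : Continuous fun p : ℝ × ℝ => cexp (-(p.1 * circleMap c R p.2))).mul
      (hgγ.comp continuous_snd)))
    ((integrableOn_pow_mul_cexp_neg_mul_Ioi hδ a).norm.mul_const M)]
  · refine circleIntegral.integral_congr hR fun z hz => ?_
    simp_rw [← mul_assoc]
    rw [integral_mul_const, integral_pow_mul_cexp_neg_mul ((sub_pos.2 hRc).trans_le (hre z hz)),
      mul_div_assoc', div_mul_eq_mul_div]
  · filter_upwards [ae_restrict_mem measurableSet_Ioi] with x hx θ
    have hz := circleMap_mem_sphere c hR θ
    rw [← mul_assoc, norm_mul, norm_pow_mul_cexp_neg_mul hx.le, norm_pow_mul_cexp_neg_mul hx.le]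
    have hxa := pow_nonneg hx.out.le a
    refine mul_le_mul (mul_le_mul_of_nonneg_left (Real.exp_le_exp.2 ?_) hxa)
      (hM _ hz) (norm_nonneg _) (mul_nonneg hxa (Real.exp_pos _).le)
    rw [ofReal_re]
    nlinarith [hre _ hz, hx.out]

section Cobounded

variable {𝕜 : Type*} [NormedField 𝕜]

theorem tendsto_mul_sub_inv_cobounded (b : 𝕜) :
    Tendsto (fun z : 𝕜 => z * (z - b)⁻¹) (cobounded 𝕜) (𝓝 1) := by
  have : Tendsto (fun z : 𝕜 => (1 - b * z⁻¹)⁻¹) (cobounded 𝕜) (𝓝 1) := by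
    simpa using ((tendsto_inv₀_cobounded.const_mul b).const_sub 1).inv₀ (by simp)
  refine this.congr' ?_
  filter_upwards [eventually_ne_cobounded 0] with z hz
  rw [← div_eq_mul_inv, one_sub_div hz, inv_div, div_eq_mul_inv]

theorem tendsto_pow_mul_prod_sub_zpow_cobounded {ι : Type*} (s : Finset ι) (b : ι → 𝕜)
    (n : ι → ℕ) {a : ℕ} (ha : a < ∑ i ∈ s, n i) :
    Tendsto (fun z : 𝕜 => z ^ a * ∏ i ∈ s, (z - b i) ^ (-(n i : ℤ))) (cobounded 𝕜) (𝓝 0) := by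
  have h1 : Tendsto (fun z : 𝕜 => ∏ i ∈ s, (z * (z - b i)⁻¹) ^ n i) (cobounded 𝕜)
      (𝓝 (∏ i ∈ s, 1 ^ n i)) :=
    tendsto_finsetProd s fun i _ => (tendsto_mul_sub_inv_cobounded (b i)).pow (n i)
  simp only [one_pow, prod_const_one] at h1
  have h2 : Tendsto (fun z : 𝕜 => z⁻¹ ^ (∑ i ∈ s, n i - a)) (cobounded 𝕜) (𝓝 0) := by
    simpa [zero_pow (Nat.sub_ne_zero_of_lt ha)] using
      (tendsto_inv₀_cobounded (α := 𝕜)).pow (∑ i ∈ s, n i - a)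
  refine (zero_mul (1 : 𝕜) ▸ h2.mul h1).congr' ?_
  filter_upwards [eventually_ne_cobounded 0] with z hz
  simp only [zpow_neg, zpow_natCast, mul_pow, prod_mul_distrib, prod_pow_eq_pow_sum,
    inv_pow, prod_inv_distrib, ← mul_assoc]
  congr 1
  rw [pow_sub₀ _ hz ha.le]
  field_simp

end Cobounded

theorem differentiableOn_prod_sub_zpow {𝕜 ι : Type*} [NontriviallyNormedField 𝕜] (s : Finset ι)
    (b : ι → 𝕜) (n : ι → ℤ) {U : Set 𝕜} (hU : ∀ i ∈ s, b i ∉ U) :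
    DifferentiableOn 𝕜 (fun z => ∏ i ∈ s, (z - b i) ^ n i) U :=
  DifferentiableOn.fun_finsetProd fun i hi => (differentiableOn_id.sub_const (b i)).zpow <|
    Or.inl fun _ hz => sub_ne_zero.2 fun h => hU i hi (h ▸ hz)

theorem Metric.compl_ball_mem_nhds {α : Type*} [PseudoMetricSpace α] {c a : α} {R : ℝ}
    (ha : a ∉ closedBall c R) : (ball c R)ᶜ ∈ 𝓝 a :=
  mem_of_superset (isClosed_closedBall.isOpen_compl.mem_nhds ha)
    (compl_subset_compl.2 ball_subset_closedBall)

namespace Complex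

variable {c : ℂ} {R : ℝ}

theorem circleIntegral_eq_of_differentiableOn_compl_ball {f : ℂ → ℂ} (hR : 0 < R)
    (hf : DifferentiableOn ℂ f (ball c R)ᶜ) {ρ : ℝ} (hρ : R ≤ ρ) :
    ∮ z in C(c, ρ), f z = ∮ z in C(c, R), f z :=
  circleIntegral_eq_of_differentiable_on_annulus_off_countable hR hρ countable_empty
    (hf.continuousOn.mono fun _ hz => hz.2)
    fun _ hz => hf.differentiableAt (compl_ball_mem_nhds hz.1.2)

/-- On a large circle `f z` is close to `L / (z - c)`. -/
theorem circleIntegral_eq_of_tendsto_mul_cobounded {f : ℂ → ℂ} {L : ℂ} (hR : 0 < R)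
    (hf : DifferentiableOn ℂ f (ball c R)ᶜ)
    (hL : Tendsto (fun z => z * f z) (cobounded ℂ) (𝓝 L)) :
    ∮ z in C(c, R), f z = 2 * π * I * L := by
  have hf0 : Tendsto f (cobounded ℂ) (𝓝 0) := by
    refine (mul_zero L ▸ hL.mul tendsto_inv₀_cobounded).congr' ?_
    filter_upwards [eventually_ne_cobounded 0] with z hz
    field_simp
  have hL' : Tendsto (fun z => (z - c) * f z) (cobounded ℂ) (𝓝 L) := by
    simpa [sub_mul] using hL.sub (hf0.const_mul c)
  rw [← sub_eq_zero, ← norm_le_zero_iff]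
  refine le_of_forall_pos_le_add fun ε hε => ?_
  have hε' : 0 < ε / (2 * π) := by positivity
  obtain ⟨r, -, hr⟩ :=
    (hasBasis_cobounded_compl_closedBall c).mem_iff.1 (hL' (ball_mem_nhds L hε'))
  set ρ := max r R + 1
  have hRρ : R < ρ := by simp only [ρ]; linarith [le_max_right r R]
  have hρ0 : 0 < ρ := hR.trans hRρ
  have hbound : ∀ z ∈ sphere c ρ, ‖f z - L * (z - c)⁻¹‖ ≤ ε / (2 * π) / ρ := by
    intro z hz
    have hzc : ‖z - c‖ = ρ := mem_sphere_iff_norm.1 hz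
    have hclose : ‖(z - c) * f z - L‖ < ε / (2 * π) := by
      have := hr (show z ∈ (closedBall c r)ᶜ from fun h => by
        rw [mem_closedBall, dist_eq_norm, hzc] at h; linarith [le_max_left r R])
      rwa [Set.mem_preimage, mem_ball, dist_eq_norm] at this
    rw [le_div_iff₀ hρ0, ← hzc, ← norm_mul, sub_mul,
      inv_mul_cancel_right₀ (norm_ne_zero_iff.1 (hzc ▸ hρ0.ne')), mul_comm]
    exact hclose.le
  calc ‖(∮ z in C(c, R), f z) - 2 * π * I * L‖
      = ‖∮ z in C(c, ρ), (f z - L * (z - c)⁻¹)‖ := by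
        rw [circleIntegral.integral_sub, circleIntegral.integral_const_mul,
          circleIntegral.integral_sub_center_inv c hρ0.ne',
          circleIntegral_eq_of_differentiableOn_compl_ball hR hf hRρ.le, mul_comm L]
        · exact (hf.continuousOn.mono fun z hz => by
            rw [mem_sphere] at hz; rw [mem_compl_iff, mem_ball]; linarith).circleIntegrable hρ0.le
        · refine (continuousOn_const.mul ((continuousOn_id.sub continuousOn_const).inv₀
            fun z hz => ?_)).circleIntegrable hρ0.le
          exact sub_ne_zero.2 (ne_of_mem_sphere hz hρ0.ne')
    _ ≤ 2 * π * ρ * (ε / (2 * π) / ρ) :=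
        circleIntegral.norm_integral_le_of_norm_le_const hρ0.le hbound
    _ = 0 + ε := by field_simp; ring

/-- `dslope h a` has no pole at `a`, so the previous lemma applies to it. -/
theorem circleIntegral_sub_inv_mul_of_notMem_closedBall {h : ℂ → ℂ} {a : ℂ} (hR : 0 < R)
    (ha : a ∉ closedBall c R) (hh : DifferentiableOn ℂ h (ball c R)ᶜ)
    (hlim : Tendsto h (cobounded ℂ) (𝓝 0)) :
    ∮ z in C(c, R), (z - a)⁻¹ * h z = -(2 * π * I * h a) := by
  have hk : DifferentiableOn ℂ (dslope h a) (ball c R)ᶜ :=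
    (differentiableOn_dslope (compl_ball_mem_nhds ha)).2 hh
  have hklim : Tendsto (fun z => z * dslope h a z) (cobounded ℂ) (𝓝 (-h a)) := by
    have := (tendsto_mul_sub_inv_cobounded a).mul (hlim.sub_const (h a))
    rw [zero_sub, one_mul] at this
    refine this.congr' ?_
    filter_upwards [eventually_ne_cobounded a] with z hz
    rw [dslope_of_ne _ hz, slope_def_field, div_eq_mul_inv]
    ring
  have hne : ∀ z ∈ closedBall c R, z - a ≠ 0 := fun z hz =>
    sub_ne_zero.2 (ne_of_mem_of_not_mem hz ha)
  have hpole : ContinuousOn (fun z => (z - a)⁻¹) (closedBall c R) :=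
    (continuousOn_id.sub continuousOn_const).inv₀ hne
  have hsplit : EqOn (fun z => (z - a)⁻¹ * h z) (fun z => dslope h a z + h a * (z - a)⁻¹)
      (sphere c R) := fun z hz => by
    have hza := hne z (sphere_subset_closedBall hz)
    simp only
    rw [dslope_of_ne _ (sub_ne_zero.1 hza), slope_def_field]
    field_simp
    ring
  rw [circleIntegral.integral_congr hR.le hsplit, circleIntegral.integral_add,
    circleIntegral.integral_const_mul,
    circleIntegral_eq_zero_of_differentiable_on_off_countable hR.le countable_empty hpole
      fun z hz => (differentiableAt_id.sub_const a).inv (hne z (ball_subset_closedBall hz.1)),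
    circleIntegral_eq_of_tendsto_mul_cobounded hR hk hklim]
  · ring
  · exact (hk.continuousOn.mono fun z hz => (mem_sphere.1 hz).ge.not_gt).circleIntegrable hR.le
  · exact (continuousOn_const.mul (hpole.mono sphere_subset_closedBall)).circleIntegrable hR.le

variable {ι : Type*} (s : Finset ι) {b : ι → ℂ} (n : ι → ℕ)

theorem circleIntegral_pow_mul_prod_sub_zpow_eq_zero (hR : 0 < R)
    (hb : ∀ i ∈ s, b i ∈ ball c R) {d : ℕ} (hd : d + 2 ≤ ∑ i ∈ s, n i) :
    ∮ z in C(c, R), z ^ d * ∏ i ∈ s, (z - b i) ^ (-(n i : ℤ)) = 0 := by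
  have hlim : Tendsto (fun z : ℂ => z * (z ^ d * ∏ i ∈ s, (z - b i) ^ (-(n i : ℤ))))
      (cobounded ℂ) (𝓝 0) := by
    simpa only [← mul_assoc, ← pow_succ'] using
      tendsto_pow_mul_prod_sub_zpow_cobounded s b n (a := d + 1) (by omega)
  rw [circleIntegral_eq_of_tendsto_mul_cobounded hR ((differentiableOn_pow d).fun_mul
    (differentiableOn_prod_sub_zpow s b _ fun i hi h => h (hb i hi))) hlim, mul_zero]

theorem circleIntegral_sub_inv_mul_prod_sub_zpow {a : ℂ} (hR : 0 < R) (ha : a ∉ closedBall c R)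
    (hb : ∀ i ∈ s, b i ∈ ball c R) (hn : 1 ≤ ∑ i ∈ s, n i) :
    ∮ z in C(c, R), (z - a)⁻¹ * ∏ i ∈ s, (z - b i) ^ (-(n i : ℤ)) =
      -(2 * π * I * ∏ i ∈ s, (a - b i) ^ (-(n i : ℤ))) :=
  circleIntegral_sub_inv_mul_of_notMem_closedBall hR ha
    (differentiableOn_prod_sub_zpow s b _ fun i hi h => h (hb i hi))
    (by simpa only [pow_zero, one_mul] using
      tendsto_pow_mul_prod_sub_zpow_cobounded s b n (a := 0) hn)

end Complex

theorem integral_pow_mul_mlQ {m : ℕ} (β : Fin m → ℝ) (p : ℕ) {c R : ℝ} (ν : Fin m → ℕ)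
    (hR : 0 ≤ R) (hRc : R < c) (hβ : ∀ l, (β l : ℂ) ∉ sphere (c : ℂ) R) (j : ℕ) :
    ∫ x in Ioi (0 : ℝ), (x : ℂ) ^ j * mlQ β p c R ν x =
      -((∏ l, (-(β l : ℂ)) ^ (ν l)) / (2 * π * I * (((∑ k, ν k) + p - 1).factorial : ℂ))) *
        ((j + p).factorial * ∮ t in C((c : ℂ), R),
          t ^ ((((∑ k, ν k) + p - 1 : ℕ) : ℤ) - (j + p + 1 : ℕ)) *
            ∏ l, (t - (β l : ℂ)) ^ (-(ν l : ℤ))) := by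
  have hcont : ContinuousOn (fun t : ℂ => t ^ ((∑ k, ν k) + p - 1) *
      ∏ l, (t - (β l : ℂ)) ^ (-(ν l : ℤ))) (sphere (c : ℂ) R) :=
    ((differentiableOn_pow _).mul
      (differentiableOn_prod_sub_zpow _ _ _ fun l _ => hβ l)).continuousOn
  have hquot : EqOn (fun t : ℂ => t ^ ((∑ k, ν k) + p - 1) *
      (∏ l, (t - (β l : ℂ)) ^ (-(ν l : ℤ))) / t ^ (j + p + 1))
      (fun t => t ^ ((((∑ k, ν k) + p - 1 : ℕ) : ℤ) - (j + p + 1 : ℕ)) *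
        ∏ l, (t - (β l : ℂ)) ^ (-(ν l : ℤ))) (sphere (c : ℂ) R) := fun t ht => by
    have ht0 : t ≠ 0 := by
      rintro rfl
      rw [mem_sphere, dist_eq_norm, zero_sub, norm_neg, norm_real, Real.norm_eq_abs] at ht
      linarith [le_abs_self c]
    simp only [zpow_sub₀ ht0, zpow_natCast]
    ring
  rw [← circleIntegral.integral_congr hR hquot,
    ← integral_pow_mul_circleIntegral_cexp_neg_mul (j + p) hR (by simpa using hRc) hcont,
    ← integral_const_mul]
  refine setIntegral_congr_fun measurableSet_Ioi fun x _ => ?_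
  simp only [mlQ, mul_assoc (cexp _), pow_add]
  ring

theorem stmt_15_general (m : ℕ) (hm : 1 ≤ m) (β : Fin m → ℝ) (n : Fin m → ℕ) (hn : ∀ k, 1 ≤ n k) (p : ℕ)
    (c R : ℝ) (hR : 0 < R) (hRc : R < c) (hβc : ∀ l, |β l - c| < R) :
    (∀ j : ℕ, j + 2 ≤ ∑ k, n k →
      ∫ x in Set.Ioi (0 : ℝ), (x : ℂ) ^ j * mlQ β p c R n x = 0) ∧
    ∫ x in Set.Ioi (0 : ℝ), (x : ℂ) ^ ((∑ k, n k) - 1) * mlQ β p c R n x = 1 := by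
  have hball : ∀ l, (β l : ℂ) ∈ ball (c : ℂ) R := fun l => by
    rw [mem_ball, dist_eq_norm, ← ofReal_sub, norm_real, Real.norm_eq_abs]
    exact hβc l
  have hzero : (0 : ℂ) ∉ closedBall (c : ℂ) R := by
    rw [mem_closedBall, dist_eq_norm, zero_sub, norm_neg, norm_real, Real.norm_eq_abs,
      abs_of_pos (hR.trans hRc)]
    exact hRc.not_ge
  have hmoment := integral_pow_mul_mlQ β p n hR.le hRc fun l h => (mem_sphere.1 h).not_lt (hball l)
  refine ⟨fun j hj => ?_, ?_⟩
  · rw [hmoment, show (((∑ k, n k) + p - 1 : ℕ) : ℤ) - (j + p + 1 : ℕ) = ((∑ k, n k) - 2 - j : ℕ)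
      by omega]
    simp only [zpow_natCast]
    rw [circleIntegral_pow_mul_prod_sub_zpow_eq_zero _ n hR (fun l _ => hball l) (by omega),
      mul_zero, mul_zero]
  · have hN : 1 ≤ ∑ k, n k :=
      (hn ⟨0, hm⟩).trans (single_le_sum (fun k _ => (n k).zero_le) (mem_univ _))
    have hP : ∏ l, (-(β l : ℂ)) ^ n l ≠ 0 := prod_ne_zero_iff.2 fun l _ => pow_ne_zero _ <|
      neg_ne_zero.2 fun h => hzero (h ▸ ball_subset_closedBall (hball l))
    have hres := circleIntegral_sub_inv_mul_prod_sub_zpow _ n hR hzero (fun l _ => hball l) hN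
    simp only [sub_zero] at hres
    rw [hmoment, show (((∑ k, n k) + p - 1 : ℕ) : ℤ) - ((∑ k, n k) - 1 + p + 1 : ℕ) = -1 by omega]
    simp only [zpow_neg_one]
    rw [hres, show (∑ k, n k) - 1 + p = (∑ k, n k) + p - 1 by omega]
    simp only [zero_sub, zpow_neg, zpow_natCast, prod_inv_distrib]
    field_simp [Nat.factorial_ne_zero]

theorem stmt_15 (m : ℕ) (hm : 1 ≤ m) (β : Fin m → ℝ) (hβpos : ∀ k, 0 < β k)
    (hβ : Function.Injective β) (n : Fin m → ℕ) (hn : ∀ k, 1 ≤ n k) (p : ℕ)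
    (c R : ℝ) (hc : 0 < c) (hR : 0 < R) (hRc : R < c) (hβc : ∀ l, |β l - c| < R) :
    (∀ j : ℕ, j + 2 ≤ ∑ k, n k →
      ∫ x in Set.Ioi (0 : ℝ), (x : ℂ) ^ j * mlQ β p c R n x = 0) ∧
    ∫ x in Set.Ioi (0 : ℝ), (x : ℂ) ^ ((∑ k, n k) - 1) * mlQ β p c R n x = 1 :=
  stmt_15_general m hm β n hn p c R hR hRc hβc
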